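/- Let m, n be natural numbers and P an n×m real matrix. Then Matrix.rank P = m if and only if there exists an n×n real matrix Z with Zᵀ = Z, Matrix.rank Z = m, and Matrix.rank (fromBlocks 1 Pᵀ P Z) ≤ m, where fromBlocks 1 Pᵀ P Z is the (m+n)×(m+n) block matrix with identity m×m top-left block. -/

import Mathlib

open Matrix

/-!
Eliminating with the invertible identity block (Schur complement),
`rank (fromBlocks 1 Pᵀ P Z) = m + rank (Z - P * Pᵀ)`. So the block matrix has rank at most `m`
exactly when `Z = P * Pᵀ`, and then `rank Z = rank (P * Pᵀ) = rank P`.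
-/

theorem Submodule.finrank_prod {K V W : Type*} [Field K] [AddCommGroup V] [Module K V]
    [AddCommGroup W] [Module K W] (p : Submodule K V) (q : Submodule K W)
    [FiniteDimensional K p] [FiniteDimensional K q] :
    Module.finrank K (p.prod q) = Module.finrank K p + Module.finrank K q := by
  have hinj : Function.Injective (p.subtype.prodMap q.subtype) :=
    Prod.map_injective.2 ⟨p.injective_subtype, q.injective_subtype⟩
  rw [← Module.finrank_prod, ← LinearMap.finrank_range_of_inj hinj, LinearMap.range_prodMap,
    Submodule.range_subtype, Submodule.range_subtype]

namespace Matrix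

variable {K l m n o : Type*} [Field K]

theorem mulVecLin_fromBlocks_zero₁₂_zero₂₁ [Fintype m] [Fintype o]
    (A : Matrix l m K) (D : Matrix n o K) :
    (fromBlocks A 0 0 D).mulVecLin =
      (LinearEquiv.sumArrowLequivProdArrow l n K K).symm.toLinearMap ∘ₗ
        A.mulVecLin.prodMap D.mulVecLin ∘ₗ
          (LinearEquiv.sumArrowLequivProdArrow m o K K).toLinearMap := by
  ext v (i | i) <;> simp [fromBlocks_mulVec, Function.comp_def] <;> rfl

theorem rank_fromBlocks_zero₁₂_zero₂₁ [Fintype l] [Fintype m] [Fintype n] [Fintype o]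
    (A : Matrix l m K) (D : Matrix n o K) :
    (fromBlocks A 0 0 D).rank = A.rank + D.rank := by
  rw [rank, mulVecLin_fromBlocks_zero₁₂_zero₂₁, LinearMap.range_comp,
    LinearMap.range_comp_of_range_eq_top _ (LinearEquiv.range _), LinearEquiv.finrank_map_eq,
    LinearMap.range_prodMap, Submodule.finrank_prod]
  rfl

theorem rank_eq_zero_iff [Finite m] [Fintype n] {A : Matrix m n K} : A.rank = 0 ↔ A = 0 := by
  classical
  rw [rank, Submodule.finrank_eq_zero, LinearMap.range_eq_bot, ← toLin'_apply']
  exact toLin'.map_eq_zero_iff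

theorem rank_fromBlocks_of_invertible₁₁ [Fintype l] [Fintype m] [Fintype n]
    [DecidableEq l] [DecidableEq m] [DecidableEq n] (A : Matrix m m K) (B : Matrix m n K)
    (C : Matrix l m K) (D : Matrix l n K) [Invertible A] :
    (fromBlocks A B C D).rank = A.rank + (D - C * ⅟A * B).rank := by
  rw [fromBlocks_eq_of_invertible₁₁, rank_mul_eq_left_of_isUnit_det,
    rank_mul_eq_right_of_isUnit_det, rank_fromBlocks_zero₁₂_zero₂₁]
  all_goals simp

end Matrix

theorem rank_eq_iff_exists_symmetric_Z
    (m n : ℕ) (P : Matrix (Fin n) (Fin m) ℝ) :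
    Matrix.rank P = m ↔
      ∃ Z : Matrix (Fin n) (Fin n) ℝ, Zᵀ = Z ∧ Matrix.rank Z = m ∧
        Matrix.rank (Matrix.fromBlocks (1 : Matrix (Fin m) (Fin m) ℝ) Pᵀ P Z) ≤ m := by
  have hU (Z : Matrix (Fin n) (Fin n) ℝ) :
      (fromBlocks (1 : Matrix (Fin m) (Fin m) ℝ) Pᵀ P Z).rank = m + (Z - P * Pᵀ).rank := by
    let : Invertible (1 : Matrix (Fin m) (Fin m) ℝ) := invertibleOne
    simpa using rank_fromBlocks_of_invertible₁₁ 1 Pᵀ P Z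
  constructor
  · intro hP
    refine ⟨P * Pᵀ, by rw [transpose_mul, transpose_transpose],
      by rw [rank_self_mul_transpose, hP], ?_⟩
    simp [hU]
  · rintro ⟨Z, -, hZ, hZU⟩
    rw [hU] at hZU
    have hZP : Z = P * Pᵀ := sub_eq_zero.1 (rank_eq_zero_iff.1 (by omega))
    rwa [hZP, rank_self_mul_transpose] at hZ
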